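/- arXiv:1701.03614 — 3 statements merged into one kernel-verified Lean document; each statement's English description precedes it below -/
import Mathlib

section
/- Let D ⊆ ℝⁿ be open and convex, and let f : D → ℝⁿ be continuously differentiable such that for every x ∈ D the transpose of the Jacobian of f at x is a compartmental matrix, i.e., ∂f_i/∂x_j(x) ≥ 0 for all i ≠ j and Σ_{i=1}^n ∂f_i/∂x_j(x) ≤ 0 for all j. Then for all x, x̃ ∈ D, Σ_{i=1}^n sgn(x_i − x̃_i)·(f_i(x) − f_i(x̃)) ≤ 0, where sgn denotes the sign function with sgn(0) = 0. -/
open Matrix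

/-!
By the mean value theorem on the segment from `y` to `x`, with `s = sign (x - y)` held fixed,
`s ⬝ (f x - f y) = s ⬝ (J (x - y))` for the Jacobian `J` at some point of `D`. For `d = x - y`
each term satisfies `s_i J_ij d_j ≤ |d_j| J_ij`, with equality on the diagonal and by
`J_ij ≥ 0` off it, so `s ⬝ J d ≤ ∑_j |d_j| ∑_i J_ij ≤ 0` by the column-sum condition.
-/

namespace Real

theorem sign_mul_self_eq_abs (r : ℝ) : sign r * r = |r| := by
  rcases lt_trichotomy r 0 with h | rfl | h
  · rw [sign_of_neg h, abs_of_neg h, neg_one_mul]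
  · simp
  · rw [sign_of_pos h, abs_of_pos h, one_mul]

theorem abs_sign_le_one (r : ℝ) : |sign r| ≤ 1 := by
  rcases sign_apply_eq r with h | h | h <;> simp [h]

theorem sign_mul_le_abs (r s : ℝ) : sign r * s ≤ |s| :=
  calc sign r * s ≤ |sign r| * |s| := abs_mul (sign r) s ▸ le_abs_self _
    _ ≤ |s| := mul_le_of_le_one_left (abs_nonneg s) (abs_sign_le_one r)

end Real

theorem Matrix.sum_sign_mul_mulVec_nonpos {ι : Type*} [Fintype ι] (A : Matrix ι ι ℝ)
    (hoff : ∀ i j, i ≠ j → 0 ≤ A i j) (hcol : ∀ j, ∑ i, A i j ≤ 0) (d : ι → ℝ) :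
    ∑ i, Real.sign (d i) * (A *ᵥ d) i ≤ 0 := by
  have hentry : ∀ i j, Real.sign (d i) * (A i j * d j) ≤ |d j| * A i j := by
    intro i j
    by_cases hij : i = j
    · subst hij
      exact le_of_eq (by rw [← Real.sign_mul_self_eq_abs]; ring)
    · rw [mul_left_comm, mul_comm (|d j|)]
      exact mul_le_mul_of_nonneg_left (Real.sign_mul_le_abs _ _) (hoff i j hij)
  calc ∑ i, Real.sign (d i) * (A *ᵥ d) i
      = ∑ j, ∑ i, Real.sign (d i) * (A i j * d j) := by
        simp only [mulVec, dotProduct, Finset.mul_sum]; exact Finset.sum_comm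
    _ ≤ ∑ j, |d j| * ∑ i, A i j := by
        gcongr with j
        rw [Finset.mul_sum]
        exact Finset.sum_le_sum fun i _ => hentry i j
    _ ≤ 0 := Finset.sum_nonpos fun j _ => mul_nonpos_of_nonneg_of_nonpos (abs_nonneg _) (hcol j)

theorem IsOpen.apply_le_of_apply_fderiv_sub_nonpos {E F : Type*} [NormedAddCommGroup E]
    [NormedSpace ℝ E] [NormedAddCommGroup F] [NormedSpace ℝ F] {D : Set E} (hDopen : IsOpen D)
    (hDconv : Convex ℝ D) {f : E → F} (hf : DifferentiableOn ℝ f D) (L : F →L[ℝ] ℝ) {x y : E}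
    (hx : x ∈ D) (hy : y ∈ D) (h : ∀ z ∈ D, L (fderiv ℝ f z (x - y)) ≤ 0) :
    L (f x) ≤ L (f y) := by
  have hderiv : ∀ z ∈ D, HasFDerivWithinAt (L ∘ f) (L.comp (fderiv ℝ f z)) D z := fun z hz =>
    (L.hasFDerivAt.comp z (hf.differentiableAt (hDopen.mem_nhds hz)).hasFDerivAt).hasFDerivWithinAt
  obtain ⟨z, hz, hmvt⟩ := domain_mvt hderiv hDconv hy hx
  have hz_nonpos := h z (hDconv.segment_subset hy hx hz)
  simp only [Function.comp_apply, ContinuousLinearMap.comp_apply] at hmvt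
  linarith

/-- If `f : D → ℝⁿ` is continuously differentiable on an open convex set `D` and
the transpose of its Jacobian is a compartmental matrix everywhere on `D`
(`∂f_i/∂x_j ≥ 0` for `i ≠ j` and `Σ_i ∂f_i/∂x_j ≤ 0` for all `j`), then
`Σ_i sgn(x_i − x̃_i)·(f_i(x) − f_i(x̃)) ≤ 0` for all `x, x̃ ∈ D`. -/
theorem monotone_flow_l1_dissipativity {n : ℕ}
    (D : Set (Fin n → ℝ)) (hDopen : IsOpen D) (hDconv : Convex ℝ D)
    (f : (Fin n → ℝ) → (Fin n → ℝ))
    (hf : ContDiffOn ℝ 1 f D)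
    (hMetzler : ∀ x ∈ D, ∀ i j, i ≠ j → 0 ≤ fderiv ℝ f x (Pi.single j 1) i)
    (hcol : ∀ x ∈ D, ∀ j, ∑ i, fderiv ℝ f x (Pi.single j 1) i ≤ 0)
    (x y : Fin n → ℝ) (hx : x ∈ D) (hy : y ∈ D) :
    ∑ i, Real.sign (x i - y i) * (f x i - f y i) ≤ 0 := by
  let L : (Fin n → ℝ) →L[ℝ] ℝ := ∑ i, Real.sign (x i - y i) • ContinuousLinearMap.proj i
  have hL : ∀ v, L v = ∑ i, Real.sign (x i - y i) * v i := fun v => by simp [L]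
  have hflow : ∀ z ∈ D, L (fderiv ℝ f z (x - y)) ≤ 0 := fun z hz => by
    let J := LinearMap.toMatrix' (fderiv ℝ f z : (Fin n → ℝ) →ₗ[ℝ] Fin n → ℝ)
    have hJ : fderiv ℝ f z (x - y) = J *ᵥ (x - y) := (LinearMap.toMatrix'_mulVec _ _).symm
    rw [hL, hJ]
    exact J.sum_sign_mul_mulVec_nonpos (hMetzler z hz) (hcol z hz) (x - y)
  have hmono := hDopen.apply_le_of_apply_fderiv_sub_nonpos hDconv (hf.differentiableOn one_ne_zero) L
    hx hy hflow
  simpa only [hL, mul_sub, Finset.sum_sub_distrib, sub_nonpos] using hmono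
end

section
/- Let f : ℝⁿ → ℝⁿ be continuously differentiable, let u ∈ ℝⁿ be constant, and let x* satisfy u + f(x*) = 0. Suppose the transpose of the Jacobian of f at x*, M = (∇f(x*))ᵀ, is a compartmental matrix (M_{ij} ≥ 0 for i ≠ j and Σ_j M_{ij} ≤ 0 for all i) and is outflow-connected: in the digraph with an edge (i,j) whenever i ≠ j and M_{ij} > 0, every node either has strictly negative row sum of M or has a directed path to a node with strictly negative row sum of M. Then x* is a locally asymptotically stable equilibrium of ẋ = u + f(x): there exists δ > 0 such that every solution with ‖x(0) − x*‖ < δ is defined for all t ≥ 0 and converges to x* as t → ∞. -/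
/-!
Outflow-connectedness yields a vector `ξ > 0` with `M ξ < 0`: perturb the all-ones vector by
`-s ε ^ d`, where `d` is the graph distance to a node with outflow. Since the linearization of the
flow at `x*` is `ẇ = Mᵀ w`, the weighted `ℓ¹` distance `V(x) = ∑ ξ_i |x_i - x*_i|` is then a
Lyapunov function: off-diagonal entries of `M` are nonnegative, so along a solution the right
derivative of `V` is at most `-c V` plus the weighted size of the nonlinear remainder, which is
`o(V)`. Hence `V` decays exponentially while it is small, and a barrier argument shows that a
solution starting in a small sublevel set of `V` never leaves it.
-/

open Matrix Filter Set Topology Asymptotics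

theorem exists_pos_le_neg_smul {ι : Type*} [Finite ι] {a ξ : ι → ℝ} (ha : ∀ i, a i < 0) :
    ∃ c > (0 : ℝ), a ≤ -c • ξ := by
  have hc i : ∀ᶠ c in 𝓝 (0 : ℝ), a i + c * ξ i < 0 :=
    ((by fun_prop : Continuous fun c : ℝ => a i + c * ξ i).tendsto' 0 (a i) (by simp))
      |>.eventually_lt_const (ha i)
  obtain ⟨c, hc, hc0 : 0 < c⟩ := (((eventually_all.2 hc).filter_mono nhdsWithin_le_nhds).and
    (self_mem_nhdsWithin (s := Ioi 0))).exists
  exact ⟨c, hc0, fun i => by simp only [Pi.smul_apply, smul_eq_mul, neg_mul]; linarith [hc i]⟩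

theorem LinearMap.apply_eq_vecMul {ι R : Type*} [Fintype ι] [DecidableEq ι] [CommSemiring R]
    (L : (ι → R) →ₗ[R] ι → R) {M : Matrix ι ι R} (hM : ∀ i j, M i j = L (Pi.single i 1) j)
    (z : ι → R) : L z = z ᵥ* M := by
  have : M = (LinearMap.toMatrix' L)ᵀ := by ext i j; simp [hM]
  rw [this, vecMul_transpose, LinearMap.toMatrix'_mulVec]

lemma mul_le_abs_of_abs_le_one {s : ℝ} (hs : |s| ≤ 1) (a : ℝ) : s * a ≤ |a| :=
  (le_abs_self _).trans (by rw [abs_mul]; exact mul_le_of_le_one_left (abs_nonneg _) hs)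

theorem HasDerivAt.exists_hasDerivWithinAt_abs {g : ℝ → ℝ} {v t : ℝ} (hg : HasDerivAt g v t) :
    ∃ s : ℝ, |s| ≤ 1 ∧ s * g t = |g t| ∧
      HasDerivWithinAt (fun τ => |g τ|) (s * v) (Ici t) t := by
  have hsign (a : ℝ) : |(SignType.sign a : ℝ)| ≤ 1 := by cases SignType.sign a <;> simp
  rcases eq_or_ne (g t) 0 with h0 | h0
  · refine ⟨SignType.sign v, hsign v, by simp [h0], ?_⟩
    rw [sign_mul_self, hasDerivWithinAt_iff_isLittleO]
    refine IsBigO.trans_isLittleO ?_ (hasDerivWithinAt_iff_isLittleO.1 hg.hasDerivWithinAt)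
    refine IsBigO.of_bound 1 <| eventually_nhdsWithin_of_forall fun τ (hτ : t ≤ τ) => ?_
    have := abs_abs_sub_abs_le_abs_sub (g τ) ((τ - t) * v)
    rw [abs_mul, abs_of_nonneg (sub_nonneg.2 hτ)] at this
    simpa [h0] using this
  · exact ⟨SignType.sign (g t), hsign _, sign_mul_self _,
      ((hasDerivAt_abs h0).comp t hg).hasDerivWithinAt⟩

theorem le_mul_exp_of_hasDerivWithinAt_le {g g' : ℝ → ℝ} {k θ : ℝ} (hk : 0 < k) (hθ : 0 < θ)
    (hg : ContinuousOn g (Ici 0)) (hg' : ∀ t ≥ 0, HasDerivWithinAt g (g' t) (Ici t) t)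
    (hbound : ∀ t ≥ 0, g t ≤ θ → g' t ≤ -k * g t) (h0 : g 0 ≤ θ) {t : ℝ} (ht : 0 ≤ t) :
    g t ≤ θ * Real.exp (-(k / 2) * t) := by
  have hB τ : HasDerivAt (fun τ => θ * Real.exp (-(k / 2) * τ))
      (-(k / 2) * (θ * Real.exp (-(k / 2) * τ))) τ :=
    (((hasDerivAt_id' τ).const_mul (-(k / 2))).exp.const_mul θ).congr_deriv (by ring)
  refine image_le_of_deriv_right_lt_deriv_boundary' (hg.mono Icc_subset_Ici_self)
    (fun τ hτ => hg' τ hτ.1) (by simpa using h0) (by fun_prop)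
    (fun τ _ => (hB τ).hasDerivWithinAt) (fun τ hτ hgτ => ?_) ⟨ht, le_rfl⟩
  -- Where `g` touches the barrier it is at most `θ`, so it decays at rate `k > k / 2` there.
  have hBθ : θ * Real.exp (-(k / 2) * τ) ≤ θ :=
    mul_le_of_le_one_right hθ.le (Real.exp_le_one_iff.2 (by nlinarith [hτ.1]))
  have hBpos : 0 < θ * Real.exp (-(k / 2) * τ) := by positivity
  have := hbound τ hτ.1 (hgτ ▸ hBθ)
  rw [hgτ] at this
  nlinarith [mul_pos hk hBpos]

section WeightedNorm

variable {ι : Type*} [Fintype ι] {ξ : ι → ℝ}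

lemma dotProduct_abs_le_mul_norm (hξ : 0 ≤ ξ) (z : ι → ℝ) :
    ξ ⬝ᵥ |z| ≤ (∑ i, ξ i) * ‖z‖ := by
  rw [Finset.sum_mul]
  exact Finset.sum_le_sum fun i _ =>
    mul_le_mul_of_nonneg_left (by simpa using norm_le_pi_norm z i) (hξ i)

lemma norm_le_mul_dotProduct_abs (hξ : ∀ i, 0 < ξ i) (z : ι → ℝ) :
    ‖z‖ ≤ (∑ i, (ξ i)⁻¹) * (ξ ⬝ᵥ |z|) := by
  have hW : 0 ≤ ξ ⬝ᵥ |z| := dotProduct_nonneg_of_nonneg (fun i => (hξ i).le) (abs_nonneg z)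
  have hκ : 0 ≤ ∑ i, (ξ i)⁻¹ := Finset.sum_nonneg fun i _ => inv_nonneg.2 (hξ i).le
  refine (pi_norm_le_iff_of_nonneg (mul_nonneg hκ hW)).2 fun i => ?_
  calc ‖z i‖ = (ξ i)⁻¹ * (ξ i * |z i|) := by
        rw [Real.norm_eq_abs, inv_mul_cancel_left₀ (hξ i).ne']
    _ ≤ (ξ i)⁻¹ * (ξ ⬝ᵥ |z|) := by
        gcongr
        · exact (inv_pos.2 (hξ i)).le
        exact Finset.single_le_sum (f := fun j => ξ j * |z j|)
          (fun j _ => mul_nonneg (hξ j).le (abs_nonneg _)) (Finset.mem_univ i)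
    _ ≤ (∑ i, (ξ i)⁻¹) * (ξ ⬝ᵥ |z|) := by
        gcongr
        exact Finset.single_le_sum (fun j _ => inv_nonneg.2 (hξ j).le) (Finset.mem_univ i)

lemma continuous_dotProduct_abs : Continuous fun z : ι → ℝ => ξ ⬝ᵥ |z| := by
  simp only [dotProduct, Pi.abs_apply]
  fun_prop

theorem exists_dotProduct_abs_le_mul_of_isLittleO (hξ : ∀ i, 0 < ξ i) {g : (ι → ℝ) → ι → ℝ}
    {x₀ : ι → ℝ} (hg : g =o[𝓝 x₀] fun y => y - x₀) {ε : ℝ} (hε : 0 < ε) :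
    ∃ θ > (0 : ℝ), ∀ y, ξ ⬝ᵥ |y - x₀| ≤ θ → ξ ⬝ᵥ |g y| ≤ ε * (ξ ⬝ᵥ |y - x₀|) := by
  set κ := ∑ i, (ξ i)⁻¹
  have hκ : 0 ≤ κ := Finset.sum_nonneg fun i _ => inv_nonneg.2 (hξ i).le
  have hW (z : ι → ℝ) : 0 ≤ ξ ⬝ᵥ |z| :=
    dotProduct_nonneg_of_nonneg (fun i => (hξ i).le) (abs_nonneg z)
  have hgW : (fun y => ξ ⬝ᵥ |g y|) =o[𝓝 x₀] fun y => ξ ⬝ᵥ |y - x₀| := by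
    refine (IsBigO.of_bound (∑ i, ξ i) (.of_forall fun y => ?_)).trans_isLittleO
      (hg.trans_isBigO (IsBigO.of_bound κ (.of_forall fun y => ?_)))
    · rw [Real.norm_of_nonneg (hW _)]
      exact dotProduct_abs_le_mul_norm (fun i => (hξ i).le) _
    · rw [Real.norm_of_nonneg (hW _)]
      exact norm_le_mul_dotProduct_abs hξ _
  obtain ⟨ρ, hρ, hρg⟩ := Metric.eventually_nhds_iff.1 (hgW.def hε)
  refine ⟨ρ / (κ + 1), by positivity, fun y hy => ?_⟩
  have hnear : dist y x₀ < ρ := by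
    rw [dist_eq_norm]
    calc ‖y - x₀‖ ≤ κ * (ξ ⬝ᵥ |y - x₀|) := norm_le_mul_dotProduct_abs hξ _
      _ ≤ κ * (ρ / (κ + 1)) := by gcongr
      _ < ρ := by rw [mul_div_assoc', div_lt_iff₀ (by positivity)]; nlinarith
  simpa only [Real.norm_of_nonneg (hW _)] using hρg hnear

end WeightedNorm

namespace Matrix

variable {ι : Type*} [Fintype ι]

def IsMetzler (M : Matrix ι ι ℝ) : Prop :=
  ∀ i j, i ≠ j → 0 ≤ M i j

def IsOutflowConnected (M : Matrix ι ι ℝ) : Prop :=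
  ∀ i, ∃ j, Relation.ReflTransGen (fun a b => a ≠ b ∧ 0 < M a b) i j ∧ ∑ k, M j k < 0

def ReachesOutflowIn (M : Matrix ι ι ℝ) : ℕ → ι → Prop
  | 0, i => ∑ j, M i j < 0
  | k + 1, i => ∃ j, (i ≠ j ∧ 0 < M i j) ∧ ReachesOutflowIn M k j

variable {M : Matrix ι ι ℝ}

lemma IsOutflowConnected.exists_reachesOutflowIn (hM : M.IsOutflowConnected) (i : ι) :
    ∃ k, M.ReachesOutflowIn k i := by
  obtain ⟨j, hij, hj⟩ := hM i
  induction hij using Relation.ReflTransGen.head_induction_on with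
  | refl => exact ⟨0, hj⟩
  | head hab _ ih =>
    obtain ⟨k, hk⟩ := ih
    exact ⟨k + 1, _, hab, hk⟩

lemma IsMetzler.mul_add_mul_le_mulVec_apply (hM : M.IsMetzler) {y : ι → ℝ} (hy : 0 ≤ y)
    {i j : ι} (hij : i ≠ j) : M i i * y i + M i j * y j ≤ (M *ᵥ y) i := by
  classical
  rw [← Finset.sum_pair hij (f := fun k => M i k * y k)]
  exact Finset.sum_le_sum_of_subset_of_nonneg (Finset.subset_univ _) fun k _ hk =>
    mul_nonneg (hM i k fun h => hk (h ▸ Finset.mem_insert_self i _)) (hy k)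

lemma IsMetzler.exists_pos_forall_rowSum_neg_or_mulVec_pos (hM : M.IsMetzler)
    (hout : M.IsOutflowConnected) :
    ∃ y : ι → ℝ, (∀ i, 0 < y i) ∧ ∀ i, ∑ j, M i j < 0 ∨ 0 < (M *ᵥ y) i := by
  classical
  let d i := Nat.find (hout.exists_reachesOutflowIn i)
  have hedge : ∀ i j, ∀ᶠ ε in 𝓝 (0 : ℝ), 0 < M i j → 0 < ε * M i i + M i j := fun i j => by
    by_cases h : 0 < M i j
    · have hlim : Tendsto (fun ε : ℝ => ε * M i i + M i j) (𝓝 0) (𝓝 (M i j)) :=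
        (by fun_prop : Continuous fun ε : ℝ => ε * M i i + M i j).tendsto' 0 _ (by simp)
      exact (hlim.eventually_const_lt h).mono fun _ hε _ => hε
    · exact .of_forall fun _ h' => absurd h' h
  have hsmall : ∀ᶠ ε in 𝓝[>] (0 : ℝ),
      0 < ε ∧ ε ≤ 1 ∧ ∀ i j, 0 < M i j → 0 < ε * M i i + M i j :=
    eventually_nhdsWithin_of_forall (fun _ h => h) |>.and <| nhdsWithin_le_nhds <|
      (eventually_le_nhds zero_lt_one).and <|
        eventually_all.2 fun i => eventually_all.2 (hedge i)
  obtain ⟨ε, hε0, hε1, hεM⟩ := hsmall.exists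
  -- `y = ε ^ d`: the edge from `i` towards the outflow outweighs the diagonal entry of row `i`.
  refine ⟨fun i => ε ^ d i, fun i => pow_pos hε0 _, fun i => ?_⟩
  have hspec : M.ReachesOutflowIn (d i) i := Nat.find_spec (hout.exists_reachesOutflowIn i)
  cases hdi : d i with
  | zero => rw [hdi] at hspec; exact .inl hspec
  | succ m =>
    rw [hdi] at hspec
    obtain ⟨j, ⟨hij, hMij⟩, hj⟩ := hspec
    have hdj : ε ^ m ≤ ε ^ d j := pow_le_pow_of_le_one hε0.le hε1 (Nat.find_le hj)
    refine .inr ?_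
    calc 0 < ε ^ m * (ε * M i i + M i j) := mul_pos (pow_pos hε0 m) (hεM i j hMij)
      _ ≤ M i i * ε ^ d i + M i j * ε ^ d j := by
        rw [hdi, pow_succ]; nlinarith [mul_le_mul_of_nonneg_left hdj hMij.le]
      _ ≤ (M *ᵥ fun k => ε ^ d k) i :=
        hM.mul_add_mul_le_mulVec_apply (fun k => (pow_pos hε0 _).le) hij

theorem IsMetzler.exists_pos_mulVec_neg (hM : M.IsMetzler) (hrow : ∀ i, ∑ j, M i j ≤ 0)
    (hout : M.IsOutflowConnected) : ∃ ξ : ι → ℝ, (∀ i, 0 < ξ i) ∧ ∀ i, (M *ᵥ ξ) i < 0 := by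
  obtain ⟨y, -, hMy⟩ := hM.exists_pos_forall_rowSum_neg_or_mulVec_pos hout
  have hMξ (s : ℝ) (i : ι) : (M *ᵥ (1 - s • y)) i = ∑ j, M i j - s * (M *ᵥ y) i := by
    simp [mulVec, dotProduct, mul_sub, Finset.sum_sub_distrib, Finset.mul_sum, mul_left_comm]
  have hpert i : ∀ᶠ s in 𝓝[>] (0 : ℝ), 0 < 1 - s * y i ∧ ∑ j, M i j - s * (M *ᵥ y) i < 0 := by
    have hpos : ∀ᶠ s in 𝓝 (0 : ℝ), 0 < 1 - s * y i :=
      (by fun_prop : Continuous fun s : ℝ => 1 - s * y i).tendsto' 0 _ (by simp)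
        |>.eventually_const_lt one_pos
    refine (hpos.filter_mono nhdsWithin_le_nhds).and ?_
    rcases hMy i with hneg | hMyi
    · exact nhdsWithin_le_nhds <|
        ((by fun_prop : Continuous fun s : ℝ => ∑ j, M i j - s * (M *ᵥ y) i).tendsto' 0 _
          (by simp)).eventually_lt_const hneg
    · exact eventually_nhdsWithin_of_forall fun s (hs : 0 < s) => by nlinarith [hrow i]
  obtain ⟨s, hs⟩ := (eventually_all.2 hpert).exists
  exact ⟨1 - s • y, fun i => by simpa using (hs i).1, fun i => hMξ s i ▸ (hs i).2⟩

lemma IsMetzler.mul_vecMul_apply_le (hM : M.IsMetzler) {w : ι → ℝ} {s : ℝ} {i : ι}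
    (hs : |s| ≤ 1) (hsw : s * w i = |w i|) : s * (w ᵥ* M) i ≤ (|w| ᵥ* M) i := by
  simp only [vecMul, dotProduct, Finset.mul_sum, Pi.abs_apply, ← mul_assoc]
  refine Finset.sum_le_sum fun j _ => ?_
  rcases eq_or_ne j i with rfl | hji
  · rw [hsw]
  · exact mul_le_mul_of_nonneg_right (mul_le_abs_of_abs_le_one hs _) (hM j i hji)

theorem IsMetzler.exists_hasDerivWithinAt_dotProduct_abs_le (hM : M.IsMetzler)
    {ξ : ι → ℝ} (hξ : 0 ≤ ξ) {c : ℝ} (hMξ : M *ᵥ ξ ≤ -c • ξ) {w : ℝ → ι → ℝ} {r : ι → ℝ}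
    {t : ℝ} (hw : HasDerivAt w (w t ᵥ* M + r) t) :
    ∃ D, HasDerivWithinAt (fun τ => ξ ⬝ᵥ |w τ|) D (Ici t) t ∧
      D ≤ -c * (ξ ⬝ᵥ |w t|) + ξ ⬝ᵥ |r| := by
  choose s hs hsw hderiv using fun i => (hasDerivAt_pi.1 hw i).exists_hasDerivWithinAt_abs
  refine ⟨∑ i, ξ i * (s i * (w t ᵥ* M + r) i),
    HasDerivWithinAt.fun_sum fun i _ => (hderiv i).const_mul (ξ i), ?_⟩
  calc ∑ i, ξ i * (s i * (w t ᵥ* M + r) i)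
      ≤ ∑ i, ξ i * ((|w t| ᵥ* M) i + |r i|) := by
        gcongr with i
        · exact hξ i
        rw [Pi.add_apply, mul_add]
        exact add_le_add (hM.mul_vecMul_apply_le (hs i) (hsw i))
          (mul_le_abs_of_abs_le_one (hs i) _)
    _ = |w t| ⬝ᵥ (M *ᵥ ξ) + ξ ⬝ᵥ |r| := by
        rw [dotProduct_mulVec, dotProduct_comm]
        simp [dotProduct, mul_add, Finset.sum_add_distrib]
    _ ≤ |w t| ⬝ᵥ (-c • ξ) + ξ ⬝ᵥ |r| := by
        gcongr
        exact dotProduct_le_dotProduct_of_nonneg_left hMξ (abs_nonneg _)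
    _ = -c * (ξ ⬝ᵥ |w t|) + ξ ⬝ᵥ |r| := by
        rw [dotProduct_smul, dotProduct_comm, smul_eq_mul]

theorem IsMetzler.exists_tendsto_of_isLittleO_vecMul (hM : M.IsMetzler) {ξ : ι → ℝ}
    (hξ : ∀ i, 0 < ξ i) {c : ℝ} (hc : 0 < c) (hMξ : M *ᵥ ξ ≤ -c • ξ)
    {F : (ι → ℝ) → ι → ℝ} {x₀ : ι → ℝ}
    (hF : (fun y => F y - (y - x₀) ᵥ* M) =o[𝓝 x₀] fun y => y - x₀) :
    ∃ δ > (0 : ℝ), ∀ x : ℝ → ι → ℝ, (∀ t ≥ (0 : ℝ), HasDerivAt x (F (x t)) t) →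
      ‖x 0 - x₀‖ < δ → Tendsto x atTop (𝓝 x₀) := by
  obtain ⟨θ, hθ, hrem⟩ := exists_dotProduct_abs_le_mul_of_isLittleO hξ hF (half_pos hc)
  set Ξ := ∑ i, ξ i
  have hΞ : 0 ≤ Ξ := Finset.sum_nonneg fun i _ => (hξ i).le
  refine ⟨θ / (Ξ + 1), by positivity, fun x hx hx0 => ?_⟩
  choose! D hD hDle using fun t (ht : 0 ≤ t) =>
    hM.exists_hasDerivWithinAt_dotProduct_abs_le (fun i => (hξ i).le) hMξ (w := (x · - x₀))
      (r := F (x t) - (x t - x₀) ᵥ* M) (((hx t ht).sub_const x₀).congr_deriv (by abel))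
  have hdecay : ∀ t ≥ 0, ξ ⬝ᵥ |x t - x₀| ≤ θ * Real.exp (-(c / 2 / 2) * t) := by
    refine fun t ht => le_mul_exp_of_hasDerivWithinAt_le (half_pos hc) hθ ?_ hD
      (fun t ht hWθ => by linarith [hDle t ht, hrem (x t) hWθ]) ?_ ht
    · exact fun t ht => (continuous_dotProduct_abs.continuousAt.comp
        ((hx t ht).continuousAt.sub continuousAt_const)).continuousWithinAt
    · calc ξ ⬝ᵥ |x 0 - x₀| ≤ Ξ * ‖x 0 - x₀‖ := dotProduct_abs_le_mul_norm (fun i => (hξ i).le) _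
        _ ≤ Ξ * (θ / (Ξ + 1)) := by gcongr
        _ ≤ θ := by rw [mul_div_assoc', div_le_iff₀ (by positivity)]; nlinarith
  have hexp : Tendsto (fun t => Real.exp (-(c / 2 / 2) * t)) atTop (𝓝 0) :=
    Real.tendsto_exp_atBot.comp (tendsto_id.const_mul_atTop_of_neg (by linarith))
  rw [tendsto_iff_norm_sub_tendsto_zero]
  refine squeeze_zero' (.of_forall fun t => norm_nonneg _)
    ((eventually_ge_atTop 0).mono fun t ht => (norm_le_mul_dotProduct_abs hξ _).trans
      (mul_le_mul_of_nonneg_left (hdecay t ht)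
        (Finset.sum_nonneg fun i _ => (inv_pos.2 (hξ i)).le))) ?_
  simpa using (hexp.const_mul θ).const_mul (∑ i, (ξ i)⁻¹)

end Matrix

/-- Let `x*` be an equilibrium of `ẋ = u + f(x)` with `f` continuously
differentiable. If `M = (∇f(x*))ᵀ` is a compartmental matrix which is outflow-connected, then
`x*` is locally asymptotically stable: there is `δ > 0` such that every solution starting within
distance `δ` of `x*` converges to `x*` as `t → ∞`. -/
theorem monotone_flow_network_local_asymptotic_stability {n : ℕ}
    (f : (Fin n → ℝ) → (Fin n → ℝ))
    (hf : ContDiff ℝ 1 f)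
    (u xstar : Fin n → ℝ)
    (heq : u + f xstar = 0)
    (M : Matrix (Fin n) (Fin n) ℝ)
    (hMdef : ∀ i j, M i j = fderiv ℝ f xstar (Pi.single i 1) j)
    (hMetzler : ∀ i j, i ≠ j → 0 ≤ M i j)
    (hrow : ∀ i, ∑ j, M i j ≤ 0)
    (hout : ∀ i : Fin n, ∃ j : Fin n,
      Relation.ReflTransGen (fun a b => a ≠ b ∧ 0 < M a b) i j ∧ ∑ k, M j k < 0) :
    ∃ δ > (0 : ℝ), ∀ x : ℝ → Fin n → ℝ,
      (∀ t ≥ (0 : ℝ), HasDerivAt x (u + f (x t)) t) →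
      ‖x 0 - xstar‖ < δ →
      Tendsto x atTop (nhds xstar) := by
  have hM : M.IsMetzler := hMetzler
  obtain ⟨ξ, hξ, hMξ⟩ := hM.exists_pos_mulVec_neg hrow hout
  obtain ⟨c, hc, hMξc⟩ := exists_pos_le_neg_smul hMξ
  refine hM.exists_tendsto_of_isLittleO_vecMul (F := fun y => u + f y) hξ hc hMξc ?_
  have hu : u = -f xstar := eq_neg_of_add_eq_zero_left heq
  refine (hf.differentiable one_ne_zero xstar).hasFDerivAt.isLittleO.congr_left fun y => ?_
  have hlin : fderiv ℝ f xstar (y - xstar) = (y - xstar) ᵥ* M :=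
    (fderiv ℝ f xstar).toLinearMap.apply_eq_vecMul hMdef _
  rw [hlin, hu]
  abel
end

section
/- Let f : ℝⁿ → ℝⁿ be continuously differentiable on an open set containing ℝⁿ₊ such that for every x ∈ ℝⁿ₊ the transpose of the Jacobian of f at x is a compartmental matrix, i.e., ∂f_i/∂x_j(x) ≥ 0 for all i ≠ j and Σ_{i=1}^n ∂f_i/∂x_j(x) ≤ 0 for all j. Let u ∈ ℝⁿ₊ be constant and let x* ∈ ℝⁿ₊ be an equilibrium (u + f(x*) = 0) that is locally asymptotically stable relative to ℝⁿ₊: there exists δ > 0 such that every solution of ẋ = u + f(x) remaining in ℝⁿ₊ with ‖x(0) − x*‖ < δ converges to x* as t → ∞. Then x* is globally asymptotically stable relative to ℝⁿ₊: every solution of ẋ = u + f(x) remaining in ℝⁿ₊ converges to x* as t → ∞. -/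
/-!
A monotone flow network is nonexpansive in ℓ¹: along two trajectories `a`, `b` the quantity
`∑ i, (aᵢ - bᵢ)⁺` is nonincreasing. Indeed it is the maximum over `S` of `∑ i ∈ S, (aᵢ - bᵢ)`, and
for a maximizing `S` (so `a ≥ b` on `S`, `a ≤ b` off `S`) the sign conditions on the Jacobian make
the derivative of that sum nonpositive. Consequently a trajectory starting ℓ¹-closer than `δ` to a
trajectory converging to `x*` eventually enters the `δ`-ball of local stability, so it converges
too. Stepping in small increments from `x*` up to `x 0 ⊔ x*`, and then from there down to `x 0`,
carries convergence over to `x`. The intermediate trajectories stay above `x*`, resp. above `x`,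
by order preservation, hence in the orthant; they exist for all time because the vector field
clamped to a large box is bounded and Lipschitz, and the ℓ¹ bound keeps them inside that box.
-/

open Matrix Filter

open Set Topology NNReal

theorem sup'_le_of_hasDerivWithinAt_nonpos_of_active {κ : Type*} {s : Finset κ}
    (hs : s.Nonempty) {g g' : κ → ℝ → ℝ} {a b : ℝ} (hab : a ≤ b)
    (hcont : ∀ k ∈ s, ContinuousOn (g k) (Icc a b))
    (hderiv : ∀ k ∈ s, ∀ t ∈ Ico a b, HasDerivWithinAt (g k) (g' k t) (Ici t) t)
    (hactive : ∀ k ∈ s, ∀ t ∈ Ico a b, g k t = s.sup' hs (g · t) → g' k t ≤ 0) :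
    s.sup' hs (g · b) ≤ s.sup' hs (g · a) := by
  set φ : ℝ → ℝ := fun t ↦ s.sup' hs (g · t)
  have hφ : ContinuousOn φ (Icc a b) := ContinuousOn.finset_sup'_apply hs hcont
  refine image_le_of_liminf_slope_right_le_deriv_boundary (B := fun _ ↦ φ a) hφ le_rfl
    continuousOn_const (fun t _ ↦ hasDerivWithinAt_const t _ (φ a)) (fun t ht r hr ↦ ?_)
    ⟨hab, le_rfl⟩
  have hIcc : Icc a b ∈ 𝓝[>] t := Icc_mem_nhdsGT_of_mem ht
  have hmax : ∀ᶠ z in 𝓝[>] t, ∃ k ∈ s, g k z = φ z :=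
    Eventually.of_forall fun z ↦ (s.exists_mem_eq_sup' hs (g · z)).imp fun _ h ↦ ⟨h.1, h.2.symm⟩
  obtain ⟨k, hk, hfreq⟩ := (Filter.frequently_exists_finset s).mp hmax.frequently
  have hkt : g k t = φ t := by
    have hlim : Tendsto (fun z ↦ g k z - φ z) (𝓝[>] t) (𝓝 (g k t - φ t)) :=
      ((hcont k hk t (Ico_subset_Icc_self ht)).sub (hφ t (Ico_subset_Icc_self ht))).mono_left
        (nhdsWithin_le_of_mem hIcc)
    have h0 := isClosed_singleton.mem_of_frequently_of_tendsto
      (hfreq.mono fun z hz ↦ show g k z - φ z ∈ ({0} : Set ℝ) by simp [hz]) hlim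
    simpa [sub_eq_zero] using h0
  have hslope : ∀ᶠ z in 𝓝[>] t, slope (g k) t z < r := by
    have := (hasDerivWithinAt_iff_tendsto_slope' (lt_irrefl t)).mp (hderiv k hk t ht).Ioi_of_Ici
    exact this.eventually (gt_mem_nhds ((hactive k hk t ht hkt).trans_lt hr))
  refine (hfreq.and_eventually hslope).mono fun z ⟨hz, hzr⟩ ↦ ?_
  rwa [slope_def_field, ← hz, ← hkt, ← slope_def_field]

theorem exists_forall_hasDerivAt_of_lipschitzWith_of_norm_le {E : Type*} [NormedAddCommGroup E]
    [NormedSpace ℝ E] [CompleteSpace E] {v : E → E} {K : ℝ≥0} (hv : LipschitzWith K v) {C : ℝ}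
    (hC : ∀ x, ‖v x‖ ≤ C) (x₀ : E) : ∃ γ : ℝ → E, γ 0 = x₀ ∧ ∀ t, HasDerivAt γ (v (γ t)) t := by
  have hlocal : ∀ k : ℕ, ∃ α : ℝ → E, α 0 = x₀ ∧
      ∀ t : ℝ, |t| < k + 1 → HasDerivAt α (v (α t)) t := fun k ↦ by
    set r : ℝ≥0 := k + 1
    have hr : (r : ℝ) = k + 1 := by simp [r]
    have hpl : IsPicardLindelof (fun _ ↦ v) (tmin := -r) (tmax := r)
        ⟨0, by simp⟩ x₀ (C.toNNReal * r) 0 C.toNNReal K :=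
      { lipschitzOnWith := fun _ _ ↦ hv.lipschitzOnWith
        continuousOn := fun _ _ ↦ continuousOn_const
        norm_le := fun _ _ x _ ↦ (hC x).trans (Real.le_coe_toNNReal C)
        mul_max_le := by simp }
    obtain ⟨α, hα0, hα⟩ := hpl.exists_eq_forall_mem_Icc_hasDerivWithinAt₀
    refine ⟨α, hα0, fun t ht ↦ ?_⟩
    rw [abs_lt, ← hr] at ht
    exact (hα t (Ioo_subset_Icc_self ht)).hasDerivAt (Icc_mem_nhds ht.1 ht.2)
  choose α hα0 hα using hlocal
  have hagree : ∀ (j k : ℕ) (t : ℝ), |t| < j + 1 → |t| < k + 1 → α j t = α k t := by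
    intro j k t hj hk
    set m : ℝ := min (j : ℝ) k + 1
    have hsol : ∀ i : ℕ, m ≤ i + 1 → ∀ s ∈ Ioo (-m) m,
        HasDerivAt (α i) (v (α i s)) s ∧ α i s ∈ (univ : Set E) := fun i hi s hs ↦
      ⟨hα i s (abs_lt.mpr ⟨by linarith [hs.1], by linarith [hs.2]⟩), trivial⟩
    have hm : 0 < m := by positivity
    have htm : t ∈ Ioo (-m) m := abs_lt.mp ((lt_min hj hk).trans_eq (min_add_add_right _ _ _))
    exact ODE_solution_unique_of_mem_Ioo (v := fun _ ↦ v) (s := fun _ ↦ univ)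
      (fun _ _ ↦ hv.lipschitzOnWith) ⟨neg_lt_zero.mpr hm, hm⟩
      (hsol j (by simp [m])) (hsol k (by simp [m])) (by rw [hα0, hα0]) htm
  refine ⟨fun t ↦ α ⌈|t|⌉₊ t, hα0 _, fun t ↦ ?_⟩
  set k := ⌈|t|⌉₊
  have hk : |t| < (k : ℝ) + 1 := (Nat.le_ceil _).trans_lt (lt_add_one _)
  have hnhds : {s : ℝ | |s| < (k : ℝ) + 1} ∈ 𝓝 t :=
    (isOpen_lt continuous_abs continuous_const).mem_nhds hk
  have heq : (fun s ↦ α ⌈|s|⌉₊ s) =ᶠ[𝓝 t] α k := Filter.mem_of_superset hnhds fun s hs ↦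
    hagree _ _ _ ((Nat.le_ceil _).trans_lt (lt_add_one _)) hs
  exact (hα k t hk).congr_of_eventuallyEq heq

section

variable {ι : Type*}

def IsL1Dissipative (F : (ι → ℝ) → ι → ℝ) (s : Set (ι → ℝ)) : Prop :=
  ∀ a ∈ s, ∀ b ∈ s, ∀ S : Finset ι, (∀ i ∈ S, b i ≤ a i) → (∀ i ∉ S, a i ≤ b i) →
    ∑ i ∈ S, (F a i - F b i) ≤ 0

def Matrix.IsCompartmental [Fintype ι] (M : Matrix ι ι ℝ) : Prop :=
  (∀ i j, i ≠ j → 0 ≤ M i j) ∧ ∀ i, ∑ j, M i j ≤ 0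

theorem Matrix.IsCompartmental.sum_mulVec_transpose_nonpos [Fintype ι] {A : Matrix ι ι ℝ}
    (hA : Aᵀ.IsCompartmental) {d : ι → ℝ} {S : Finset ι} (hin : ∀ j ∈ S, 0 ≤ d j)
    (hout : ∀ j ∉ S, d j ≤ 0) : ∑ i ∈ S, (A *ᵥ d) i ≤ 0 := by
  classical
  have hoff : ∀ i j, i ≠ j → 0 ≤ A i j := fun i j h ↦ hA.1 j i h.symm
  simp only [mulVec, dotProduct]
  rw [Finset.sum_comm]
  refine Finset.sum_nonpos fun j _ ↦ ?_
  rw [← Finset.sum_mul, mul_comm]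
  by_cases hj : j ∈ S
  · refine mul_nonpos_of_nonneg_of_nonpos (hin j hj) ?_
    have hsplit := Finset.sum_sdiff (f := fun i ↦ A i j) (Finset.subset_univ S)
    have hrest : 0 ≤ ∑ i ∈ Finset.univ \ S, A i j := Finset.sum_nonneg fun i hi ↦
      hoff i j fun h ↦ (Finset.mem_sdiff.mp hi).2 (h ▸ hj)
    have hcol : ∑ i, A i j ≤ 0 := hA.2 j
    linarith
  · exact mul_nonpos_of_nonpos_of_nonneg (hout j hj)
      (Finset.sum_nonneg fun i hi ↦ hoff i j fun h ↦ hj (h ▸ hi))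

theorem isL1Dissipative_of_isCompartmental_fderiv [Fintype ι] [DecidableEq ι]
    {f : (ι → ℝ) → ι → ℝ} {s : Set (ι → ℝ)} (hs : Convex ℝ s)
    (hf : ∀ x ∈ s, DifferentiableAt ℝ f x)
    (hJ : ∀ x ∈ s, (LinearMap.toMatrix' (fderiv ℝ f x : (ι → ℝ) →ₗ[ℝ] ι → ℝ))ᵀ.IsCompartmental) :
    IsL1Dissipative f s := by
  intro a ha b hb S hin hout
  set g : ℝ → ℝ := fun τ ↦ ∑ i ∈ S, f (b + τ • (a - b)) i
  have hmem : ∀ τ ∈ Icc (0 : ℝ) 1, b + τ • (a - b) ∈ s := fun τ hτ ↦ hs.add_smul_sub_mem hb ha hτ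
  have hderiv : ∀ τ ∈ Icc (0 : ℝ) 1,
      HasDerivAt g (∑ i ∈ S, fderiv ℝ f (b + τ • (a - b)) (a - b) i) τ := fun τ hτ ↦ by
    have hline : HasDerivAt (fun τ : ℝ ↦ b + τ • (a - b)) (a - b) τ := by
      simpa using ((hasDerivAt_id τ).smul_const (a - b)).const_add b
    have := (hf _ (hmem τ hτ)).hasFDerivAt.comp_hasDerivAt τ hline
    exact HasDerivAt.fun_sum fun i _ ↦ hasDerivAt_pi.mp this i
  have hanti : AntitoneOn g (Icc 0 1) := by
    refine antitoneOn_of_hasDerivWithinAt_nonpos (convex_Icc 0 1)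
      (fun τ hτ ↦ (hderiv τ hτ).continuousAt.continuousWithinAt)
      (fun τ hτ ↦ (hderiv τ (interior_subset hτ)).hasDerivWithinAt) fun τ hτ ↦ ?_
    have := (hJ _ (hmem τ (interior_subset hτ))).sum_mulVec_transpose_nonpos
      (d := a - b) (S := S) (fun j hj ↦ sub_nonneg.mpr (hin j hj))
      fun j hj ↦ sub_nonpos.mpr (hout j hj)
    simpa using this
  have := hanti (left_mem_Icc.mpr zero_le_one) (right_mem_Icc.mpr zero_le_one) zero_le_one
  simpa [g, Finset.sum_sub_distrib] using this

theorem IsL1Dissipative.const_add {F : (ι → ℝ) → ι → ℝ} {s : Set (ι → ℝ)}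
    (hF : IsL1Dissipative F s) (u : ι → ℝ) : IsL1Dissipative (fun y ↦ u + F y) s := by
  intro a ha b hb S hin hout
  simpa using hF a ha b hb S hin hout

theorem sum_posPart_eq_sup' [Fintype ι] (d : ι → ℝ) :
    ∑ i, (d i)⁺ = Finset.univ.sup' Finset.univ_nonempty fun S : Finset ι ↦ ∑ i ∈ S, d i := by
  classical
  refine le_antisymm ?_ (Finset.sup'_le _ _ fun S _ ↦ ?_)
  · calc ∑ i, (d i)⁺ = ∑ i ∈ {i | 0 < d i}, d i := by
          rw [Finset.sum_filter]
          exact Finset.sum_congr rfl fun i _ ↦ by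
            split_ifs with h
            · exact posPart_eq_self.mpr h.le
            · exact posPart_eq_zero.mpr (not_lt.mp h)
      _ ≤ _ := Finset.le_sup' (fun S : Finset ι ↦ ∑ i ∈ S, d i) (Finset.mem_univ _)
  · calc ∑ i ∈ S, d i ≤ ∑ i ∈ S, (d i)⁺ := Finset.sum_le_sum fun i _ ↦ le_posPart (d i)
      _ ≤ ∑ i, (d i)⁺ :=
          Finset.sum_le_sum_of_subset_of_nonneg (Finset.subset_univ S) fun i _ _ ↦ posPart_nonneg _

theorem Finset.nonneg_and_nonpos_of_forall_sum_le [DecidableEq ι] {d : ι → ℝ} {S : Finset ι}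
    (h : ∀ T : Finset ι, ∑ i ∈ T, d i ≤ ∑ i ∈ S, d i) :
    (∀ i ∈ S, 0 ≤ d i) ∧ ∀ i ∉ S, d i ≤ 0 := by
  refine ⟨fun i hi ↦ ?_, fun i hi ↦ ?_⟩
  · have := h (S.erase i)
    rw [← Finset.add_sum_erase S d hi] at this
    linarith
  · have := h (insert i S)
    rw [Finset.sum_insert hi] at this
    linarith

theorem IsL1Dissipative.sum_posPart_sub_le [Fintype ι] {F : (ι → ℝ) → ι → ℝ}
    {s : Set (ι → ℝ)} (hF : IsL1Dissipative F s) {a b : ℝ → ι → ℝ} {t₁ t₂ : ℝ} (h : t₁ ≤ t₂)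
    (ha : ∀ t ∈ Icc t₁ t₂, HasDerivAt a (F (a t)) t ∧ a t ∈ s)
    (hb : ∀ t ∈ Icc t₁ t₂, HasDerivAt b (F (b t)) t ∧ b t ∈ s) :
    ∑ i, (a t₂ i - b t₂ i)⁺ ≤ ∑ i, (a t₁ i - b t₁ i)⁺ := by
  classical
  have hderiv : ∀ S : Finset ι, ∀ t ∈ Icc t₁ t₂, HasDerivAt (fun t ↦ ∑ i ∈ S, (a t i - b t i))
      (∑ i ∈ S, (F (a t) i - F (b t) i)) t := fun S t ht ↦
    HasDerivAt.fun_sum fun i _ ↦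
      (hasDerivAt_pi.mp (ha t ht).1 i).sub (hasDerivAt_pi.mp (hb t ht).1 i)
  rw [sum_posPart_eq_sup', sum_posPart_eq_sup']
  refine sup'_le_of_hasDerivWithinAt_nonpos_of_active _ h
    (fun S _ t ht ↦ (hderiv S t ht).continuousAt.continuousWithinAt)
    (fun S _ t ht ↦ (hderiv S t (Ico_subset_Icc_self ht)).hasDerivWithinAt)
    fun S _ t ht hS ↦ ?_
  have ht := Ico_subset_Icc_self ht
  obtain ⟨hin, hout⟩ := Finset.nonneg_and_nonpos_of_forall_sum_le fun T ↦
    hS ▸ Finset.le_sup' (fun S : Finset ι ↦ ∑ i ∈ S, (a t i - b t i)) (Finset.mem_univ T)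
  exact hF _ (ha t ht).2 _ (hb t ht).2 S (fun i hi ↦ sub_nonneg.mp (hin i hi))
    fun i hi ↦ sub_nonpos.mp (hout i hi)

theorem IsL1Dissipative.sum_abs_sub_le [Fintype ι] {F : (ι → ℝ) → ι → ℝ}
    {s : Set (ι → ℝ)} (hF : IsL1Dissipative F s) {a b : ℝ → ι → ℝ} {t₁ t₂ : ℝ} (h : t₁ ≤ t₂)
    (ha : ∀ t ∈ Icc t₁ t₂, HasDerivAt a (F (a t)) t ∧ a t ∈ s)
    (hb : ∀ t ∈ Icc t₁ t₂, HasDerivAt b (F (b t)) t ∧ b t ∈ s) :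
    ∑ i, |a t₂ i - b t₂ i| ≤ ∑ i, |a t₁ i - b t₁ i| := by
  have habs : ∀ x y : ι → ℝ, ∑ i, |x i - y i| = ∑ i, (x i - y i)⁺ + ∑ i, (y i - x i)⁺ :=
    fun x y ↦ by simp_rw [← Finset.sum_add_distrib, ← posPart_add_negPart, ← posPart_neg, neg_sub]
  rw [habs, habs]
  exact add_le_add (hF.sum_posPart_sub_le h ha hb) (hF.sum_posPart_sub_le h hb ha)

theorem le_sum_posPart [Fintype ι] (d : ι → ℝ) (i : ι) : d i ≤ ∑ j, (d j)⁺ :=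
  (le_posPart _).trans (Finset.single_le_sum (fun j _ ↦ posPart_nonneg (d j)) (Finset.mem_univ i))

def boxClamp (c y : ι → ℝ) : ι → ℝ := y ⊓ c ⊔ 0

theorem boxClamp_nonneg (c y : ι → ℝ) : 0 ≤ boxClamp c y := le_sup_right

theorem boxClamp_mem_Icc {c : ι → ℝ} (hc : 0 ≤ c) (y : ι → ℝ) : boxClamp c y ∈ Icc 0 c :=
  ⟨boxClamp_nonneg c y, sup_le inf_le_right hc⟩

theorem boxClamp_of_mem_Icc {c y : ι → ℝ} (hy : y ∈ Icc 0 c) : boxClamp c y = y := by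
  rw [boxClamp, inf_eq_left.mpr hy.2, sup_eq_left.mpr hy.1]

theorem lipschitzWith_boxClamp [Fintype ι] (c : ι → ℝ) : LipschitzWith 1 (boxClamp c) :=
  fun a b ↦ edist_pi_le_iff.mpr fun i ↦ (((LipschitzWith.eval i).min_const (c i)).max_const 0) a b

theorem IsL1Dissipative.comp_boxClamp {F : (ι → ℝ) → ι → ℝ} (hF : IsL1Dissipative F (Ici 0))
    (c : ι → ℝ) : IsL1Dissipative (F ∘ boxClamp c) univ := by
  have hmono : ∀ {x y : ι → ℝ} {i : ι}, x i ≤ y i → boxClamp c x i ≤ boxClamp c y i :=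
    fun h ↦ max_le_max_right 0 (min_le_min_right _ h)
  exact fun a _ b _ S hin hout ↦ hF _ (boxClamp_nonneg c a) _ (boxClamp_nonneg c b) S
    (fun i hi ↦ hmono (hin i hi)) fun i hi ↦ hmono (hout i hi)

theorem exists_forall_hasDerivAt_comp_boxClamp [Fintype ι] {F : (ι → ℝ) → ι → ℝ}
    (hF : ContDiffOn ℝ 1 F (Ici 0)) {c : ι → ℝ} (hc : 0 ≤ c) (p : ι → ℝ) :
    ∃ γ : ℝ → ι → ℝ, γ 0 = p ∧ ∀ t, HasDerivAt γ (F (boxClamp c (γ t))) t := by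
  have hbox : Icc 0 c ⊆ Ici 0 := fun _ hy ↦ hy.1
  obtain ⟨L, hL⟩ := (hF.mono hbox).exists_lipschitzOnWith one_ne_zero (convex_Icc 0 c) isCompact_Icc
  obtain ⟨M, hM⟩ := isCompact_Icc.exists_bound_of_continuousOn (hF.continuousOn.mono hbox)
  have hlip : LipschitzWith (L * 1) (F ∘ boxClamp c) := lipschitzOnWith_univ.mp <|
    hL.comp (lipschitzWith_boxClamp c).lipschitzOnWith fun y _ ↦ boxClamp_mem_Icc hc y
  exact exists_forall_hasDerivAt_of_lipschitzWith_of_norm_le hlip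
    (fun y ↦ hM _ (boxClamp_mem_Icc hc y)) p

def IsNonnegSolution (F : (ι → ℝ) → ι → ℝ) (x : ℝ → ι → ℝ) : Prop :=
  ∀ t ≥ 0, HasDerivAt x (F (x t)) t ∧ x t ∈ Ici 0

theorem IsNonnegSolution.comp_add_const [Fintype ι] {F : (ι → ℝ) → ι → ℝ} {x : ℝ → ι → ℝ}
    (hx : IsNonnegSolution F x) {T : ℝ} (hT : 0 ≤ T) : IsNonnegSolution F (fun t ↦ x (t + T)) :=
  fun t ht ↦
    have h := hx (t + T) (add_nonneg ht hT)
    ⟨h.1.comp_add_const t T, h.2⟩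

theorem IsNonnegSolution.sum_abs_sub_le [Fintype ι] {F : (ι → ℝ) → ι → ℝ}
    (hF : IsL1Dissipative F (Ici 0)) {a b : ℝ → ι → ℝ} (ha : IsNonnegSolution F a)
    (hb : IsNonnegSolution F b) {t : ℝ} (ht : 0 ≤ t) :
    ∑ i, |a t i - b t i| ≤ ∑ i, |a 0 i - b 0 i| :=
  hF.sum_abs_sub_le ht (fun s hs ↦ ha s hs.1) fun s hs ↦ hb s hs.1

theorem IsNonnegSolution.exists_of_le [Fintype ι] {F : (ι → ℝ) → ι → ℝ}
    (hF : ContDiffOn ℝ 1 F (Ici 0)) (hdiss : IsL1Dissipative F (Ici 0)) {b : ℝ → ι → ℝ}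
    (hb : IsNonnegSolution F b) {B : ι → ℝ} (hB : ∀ t ≥ 0, b t ≤ B) {p : ι → ℝ} (hp : b 0 ≤ p) :
    ∃ γ, γ 0 = p ∧ IsNonnegSolution F γ := by
  -- a trajectory from `p` stays above `b` and within `∑ i, (p i - b 0 i)` of it in ℓ¹
  set c : ι → ℝ := B + fun _ ↦ ∑ i, (p i - b 0 i)
  have hsum : 0 ≤ ∑ i, (p i - b 0 i) := Finset.sum_nonneg fun i _ ↦ sub_nonneg.mpr (hp i)
  have hc : 0 ≤ c := fun i ↦ add_nonneg (((hb 0 le_rfl).2 i).trans (hB 0 le_rfl i)) hsum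
  obtain ⟨γ, hγ0, hγ⟩ := exists_forall_hasDerivAt_comp_boxClamp hF hc p
  set v := F ∘ boxClamp c
  refine ⟨γ, hγ0, fun t ht ↦ ?_⟩
  have hγv : ∀ s ∈ Icc 0 t, HasDerivAt γ (v (γ s)) s ∧ γ s ∈ univ := fun s _ ↦ ⟨hγ s, trivial⟩
  have hbv : ∀ s ∈ Icc 0 t, HasDerivAt b (v (b s)) s ∧ b s ∈ univ := fun s hs ↦ by
    have hbs := hb s hs.1
    refine ⟨?_, trivial⟩
    show HasDerivAt b (F (boxClamp c (b s))) s
    rw [boxClamp_of_mem_Icc ⟨hbs.2, (hB s hs.1).trans (le_add_of_nonneg_right fun _ ↦ hsum)⟩]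
    exact hbs.1
  have hbγ := (hdiss.comp_boxClamp c).sum_posPart_sub_le ht hbv hγv
  have hγb := (hdiss.comp_boxClamp c).sum_posPart_sub_le ht hγv hbv
  have hb_le : ∀ i, b t i ≤ γ t i := fun i ↦ by
    have hzero : ∑ i, (b 0 i - γ 0 i)⁺ = 0 := Finset.sum_eq_zero fun i _ ↦
      posPart_eq_zero.mpr (hγ0 ▸ sub_nonpos.mpr (hp i))
    linarith [le_sum_posPart (fun i ↦ b t i - γ t i) i]
  have hle_c : ∀ i, γ t i ≤ c i := fun i ↦ by
    have hinit : ∑ i, (γ 0 i - b 0 i)⁺ = ∑ i, (p i - b 0 i) := Finset.sum_congr rfl fun i _ ↦ by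
      rw [hγ0, posPart_eq_self.mpr (sub_nonneg.mpr (hp i))]
    have : b t i ≤ B i := hB t ht i
    have : γ t i - b t i ≤ _ := le_sum_posPart (fun i ↦ γ t i - b t i) i
    simp only [c, Pi.add_apply]
    linarith
  have hmem : γ t ∈ Icc 0 c := ⟨fun i ↦ ((hb t ht).2 i).trans (hb_le i), hle_c⟩
  refine ⟨?_, hmem.1⟩
  simpa only [boxClamp_of_mem_Icc hmem] using hγ t

theorem abs_le_sum_abs [Fintype ι] (z : ι → ℝ) (i : ι) : |z i| ≤ ∑ j, |z j| :=
  Finset.single_le_sum (fun j _ ↦ abs_nonneg (z j)) (Finset.mem_univ i)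

theorem norm_le_sum_abs [Fintype ι] (z : ι → ℝ) : ‖z‖ ≤ ∑ i, |z i| :=
  (pi_norm_le_iff_of_nonneg (Finset.sum_nonneg fun i _ ↦ abs_nonneg (z i))).mpr fun i ↦
    (Real.norm_eq_abs _).trans_le (abs_le_sum_abs z i)

section Stability

variable [Fintype ι] {F : (ι → ℝ) → ι → ℝ} {xstar : ι → ℝ} {δ : ℝ}

theorem IsNonnegSolution.tendsto_of_sum_abs_sub_lt (hF : IsL1Dissipative F (Ici 0))
    (hloc : ∀ y, IsNonnegSolution F y → ‖y 0 - xstar‖ < δ → Tendsto y atTop (𝓝 xstar))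
    {a b : ℝ → ι → ℝ} (ha : IsNonnegSolution F a) (hb : IsNonnegSolution F b)
    (hbx : Tendsto b atTop (𝓝 xstar)) (hab : ∑ i, |a 0 i - b 0 i| < δ) :
    Tendsto a atTop (𝓝 xstar) := by
  obtain ⟨T, hT, hT0⟩ := ((hbx.eventually (Metric.ball_mem_nhds xstar (sub_pos.mpr hab))).and
    (eventually_ge_atTop 0)).exists
  rw [dist_eq_norm] at hT
  have hclose : ‖a T - xstar‖ < δ := calc
    ‖a T - xstar‖ ≤ ‖a T - b T‖ + ‖b T - xstar‖ := norm_sub_le_norm_sub_add_norm_sub _ _ _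
    _ ≤ ∑ i, |a 0 i - b 0 i| + ‖b T - xstar‖ := by
      gcongr
      exact (norm_le_sum_abs _).trans (ha.sum_abs_sub_le hF hb hT0)
    _ < δ := by linarith
  have := hloc _ (ha.comp_add_const hT0) (by simpa using hclose)
  rw [← Filter.map_add_atTop_eq T]
  exact tendsto_map'_iff.mpr this

theorem IsNonnegSolution.tendsto_of_tendsto_of_le (hFc : ContDiffOn ℝ 1 F (Ici 0))
    (hF : IsL1Dissipative F (Ici 0)) (hδ : 0 < δ)
    (hloc : ∀ y, IsNonnegSolution F y → ‖y 0 - xstar‖ < δ → Tendsto y atTop (𝓝 xstar))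
    {b : ℝ → ι → ℝ} (hb : IsNonnegSolution F b) {B : ι → ℝ} (hB : ∀ t ≥ 0, b t ≤ B)
    {a c : ℝ → ι → ℝ} (ha : IsNonnegSolution F a) (hba : b 0 ≤ a 0)
    (hax : Tendsto a atTop (𝓝 xstar)) (hc : IsNonnegSolution F c) (hbc : b 0 ≤ c 0) :
    Tendsto c atTop (𝓝 xstar) := by
  set D := ∑ i, |c 0 i - a 0 i|
  obtain ⟨m, hm⟩ := exists_nat_gt (D / δ)
  have hm0 : (0 : ℝ) < m :=
    (div_nonneg (Finset.sum_nonneg fun i _ ↦ abs_nonneg _) hδ.le).trans_lt hm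
  set r : ℕ → ι → ℝ := fun k ↦ a 0 + ((k : ℝ) / m) • (c 0 - a 0)
  have hr : ∀ k ≤ m, b 0 ≤ r k := fun k hk ↦
    (convex_Ici (b 0)).add_smul_sub_mem hba hbc
      ⟨by positivity, div_le_one_of_le₀ (by exact_mod_cast hk) hm0.le⟩
  have hstep : ∀ k, ∑ i, |r (k + 1) i - r k i| < δ := fun k ↦ by
    have : ∀ i, r (k + 1) i - r k i = (c 0 i - a 0 i) / m := fun i ↦ by
      simp only [r, Pi.add_apply, Pi.smul_apply, Pi.sub_apply, smul_eq_mul, Nat.cast_succ]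
      field_simp
      ring
    simp_rw [this, abs_div, Nat.abs_cast, ← Finset.sum_div]
    rwa [div_lt_iff₀ hm0, ← div_lt_iff₀' hδ]
  have key : ∀ k ≤ m, ∀ y, IsNonnegSolution F y → y 0 = r k → Tendsto y atTop (𝓝 xstar) := by
    intro k
    induction k with
    | zero =>
      intro _ y hy hy0
      refine hy.tendsto_of_sum_abs_sub_lt hF hloc ha hax ?_
      simpa [hy0, r] using hδ
    | succ k ih =>
      intro hk y hy hy0
      obtain ⟨z, hz0, hz⟩ := hb.exists_of_le hFc hF hB (hr k (by omega))
      refine hy.tendsto_of_sum_abs_sub_lt hF hloc hz (ih (by omega) z hz hz0) ?_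
      simpa [hy0, hz0] using hstep k
  exact key m le_rfl c hc (by simp [r, hm0.ne'])

end Stability

end

theorem monotone_flow_network_local_implies_global_stability_general {n : ℕ}
    (U : Set (Fin n → ℝ)) (hUopen : IsOpen U)
    (hUsub : {x : Fin n → ℝ | ∀ i, 0 ≤ x i} ⊆ U)
    (f : (Fin n → ℝ) → (Fin n → ℝ))
    (hf : ContDiffOn ℝ 1 f U)
    (hMetzler : ∀ x : Fin n → ℝ, (∀ i, 0 ≤ x i) →
      ∀ i j, i ≠ j → 0 ≤ fderiv ℝ f x (Pi.single j 1) i)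
    (hcol : ∀ x : Fin n → ℝ, (∀ i, 0 ≤ x i) →
      ∀ j, ∑ i, fderiv ℝ f x (Pi.single j 1) i ≤ 0)
    (u : Fin n → ℝ)
    (xstar : Fin n → ℝ) (hxstarnn : ∀ i, 0 ≤ xstar i)
    (heq : u + f xstar = 0)
    (hloc : ∃ δ > (0 : ℝ), ∀ x : ℝ → Fin n → ℝ,
      (∀ t ≥ (0 : ℝ), HasDerivAt x (u + f (x t)) t) →
      (∀ t ≥ (0 : ℝ), ∀ i, 0 ≤ x t i) →
      ‖x 0 - xstar‖ < δ → Tendsto x atTop (nhds xstar))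
    (x : ℝ → Fin n → ℝ)
    (hode : ∀ t ≥ (0 : ℝ), HasDerivAt x (u + f (x t)) t)
    (hxnn : ∀ t ≥ (0 : ℝ), ∀ i, 0 ≤ x t i) :
    Tendsto x atTop (nhds xstar) := by
  obtain ⟨δ, hδ, hlocal⟩ := hloc
  set F : (Fin n → ℝ) → Fin n → ℝ := fun y ↦ u + f y
  have hFc : ContDiffOn ℝ 1 F (Ici 0) := (contDiffOn_const.add hf).mono hUsub
  have hdiss : IsL1Dissipative F (Ici 0) :=
    (isL1Dissipative_of_isCompartmental_fderiv (convex_Ici 0)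
      (fun y hy ↦ (hf.differentiableOn one_ne_zero y (hUsub hy)).differentiableAt
        (hUopen.mem_nhds (hUsub hy)))
      fun y hy ↦ ⟨fun i j hij ↦ hMetzler y hy j i hij.symm, hcol y hy⟩).const_add u
  have hbasin : ∀ y, IsNonnegSolution F y → ‖y 0 - xstar‖ < δ → Tendsto y atTop (𝓝 xstar) :=
    fun y hy ↦ hlocal y (fun t ht ↦ (hy t ht).1) fun t ht ↦ (hy t ht).2
  have hstar : IsNonnegSolution F fun _ ↦ xstar :=
    fun t _ ↦ ⟨(heq ▸ hasDerivAt_const t xstar : HasDerivAt _ (u + f xstar) t), hxstarnn⟩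
  have hx : IsNonnegSolution F x := fun t ht ↦ ⟨hode t ht, hxnn t ht⟩
  have hxB : ∀ t ≥ 0, x t ≤ xstar + fun _ ↦ ∑ i, |x 0 i - xstar i| := fun t ht i ↦ by
    have := ((le_abs_self _).trans (abs_le_sum_abs (x t - xstar) i)).trans
      (hx.sum_abs_sub_le hdiss hstar ht)
    simp only [Pi.add_apply, Pi.sub_apply] at this ⊢
    linarith
  obtain ⟨w, hw0, hw⟩ := hstar.exists_of_le hFc hdiss (fun _ _ ↦ le_rfl)
    (le_sup_right : xstar ≤ x 0 ⊔ xstar)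
  have hwlim := hstar.tendsto_of_tendsto_of_le hFc hdiss hδ hbasin (fun _ _ ↦ le_rfl) hstar le_rfl
    tendsto_const_nhds hw (hw0 ▸ le_sup_right : xstar ≤ w 0)
  exact hx.tendsto_of_tendsto_of_le hFc hdiss hδ hbasin hxB hw (hw0 ▸ le_sup_left) hwlim hx le_rfl

/-- For a monotone dynamical flow network `ẋ = u + f(x)` (`f` continuously
differentiable on an open set containing the nonnegative orthant, with compartmental transposed
Jacobian on the orthant) with constant inflow `u ≥ 0`, an equilibrium `x* ≥ 0` that is locally
asymptotically stable relative to the orthant is globally asymptotically stable relative to the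
orthant. -/
theorem monotone_flow_network_local_implies_global_stability {n : ℕ}
    (U : Set (Fin n → ℝ)) (hUopen : IsOpen U)
    (hUsub : {x : Fin n → ℝ | ∀ i, 0 ≤ x i} ⊆ U)
    (f : (Fin n → ℝ) → (Fin n → ℝ))
    (hf : ContDiffOn ℝ 1 f U)
    (hMetzler : ∀ x : Fin n → ℝ, (∀ i, 0 ≤ x i) →
      ∀ i j, i ≠ j → 0 ≤ fderiv ℝ f x (Pi.single j 1) i)
    (hcol : ∀ x : Fin n → ℝ, (∀ i, 0 ≤ x i) →
      ∀ j, ∑ i, fderiv ℝ f x (Pi.single j 1) i ≤ 0)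
    (u : Fin n → ℝ) (hu : ∀ i, 0 ≤ u i)
    (xstar : Fin n → ℝ) (hxstarnn : ∀ i, 0 ≤ xstar i)
    (heq : u + f xstar = 0)
    (hloc : ∃ δ > (0 : ℝ), ∀ x : ℝ → Fin n → ℝ,
      (∀ t ≥ (0 : ℝ), HasDerivAt x (u + f (x t)) t) →
      (∀ t ≥ (0 : ℝ), ∀ i, 0 ≤ x t i) →
      ‖x 0 - xstar‖ < δ → Tendsto x atTop (nhds xstar))
    (x : ℝ → Fin n → ℝ)
    (hode : ∀ t ≥ (0 : ℝ), HasDerivAt x (u + f (x t)) t)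
    (hxnn : ∀ t ≥ (0 : ℝ), ∀ i, 0 ≤ x t i) :
    Tendsto x atTop (nhds xstar) :=
  monotone_flow_network_local_implies_global_stability_general U hUopen hUsub f hf hMetzler hcol u
    xstar hxstarnn heq hloc x hode hxnn
end
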